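/- Let d ≥ 1 and let m ≥ 1 be an integer. There is a constant C = C(m) such that the following holds for every integer N ≥ 1: if X_1, …, X_N are independent identically distributed ℝ^d-valued random variables on a probability space (Ω, ℱ, P) whose common law has a density v ∈ L^1(ℝ^d) (a probability density), and h : ℝ^d → [0,∞) is bounded and measurable with ∫_{ℝ^d} h = 1, then ∫_{ℝ^d} E[ ( N^{−1} Σ_{i=1}^{N} ( h(x − X_i) − (h ⋆ v)(x) ) )^{2m} ] dx ≤ C(m) · N^{−m} · ‖h‖_{L^∞}^{2m−1}, where (h ⋆ v)(x) = ∫_{ℝ^d} h(x − z) v(z) dz. -/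

import Mathlib

open MeasureTheory Real Set
open scoped ENNReal BigOperators NNReal

noncomputable section

abbrev Eu (d : ℕ) : Type := EuclideanSpace ℝ (Fin d)

/-- Surface area of the unit sphere in `ℝ^d`. -/
def sigmaSurf (d : ℕ) : ℝ := 2 * Real.pi ^ ((d : ℝ) / 2) / Real.Gamma ((d : ℝ) / 2)

/-- The constant `C_d = ((d-2) σ_d)⁻¹`. -/
def Cconst (d : ℕ) : ℝ := (((d : ℝ) - 2) * sigmaSurf d)⁻¹

/-- Fundamental solution of the Laplace equation in `ℝ^d`. -/
def Phi (d : ℕ) (x : Eu d) : ℝ := Cconst d * ‖x‖ ^ ((2 : ℝ) - d)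

/-- Gradient of the fundamental solution: `∇Φ(x) = -(d-2) C_d x |x|^{-d}`. -/
def gradPhi (d : ℕ) (x : Eu d) : Eu d :=
  (-((d : ℝ) - 2) * Cconst d * ‖x‖ ^ (-(d : ℝ))) • x

/-- Partial derivative in the `k`-th coordinate direction. -/
def pd (d : ℕ) (k : Fin d) (g : Eu d → ℝ) (x : Eu d) : ℝ :=
  fderiv ℝ g x (EuclideanSpace.single k 1)

/-- Laplacian. -/
def lap (d : ℕ) (g : Eu d → ℝ) (x : Eu d) : ℝ :=
  ∑ k : Fin d, pd d k (pd d k g) x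

/-- Gradient as a vector in `ℝ^d`. -/
def gradVec (d : ℕ) (g : Eu d → ℝ) (x : Eu d) : Eu d :=
  (EuclideanSpace.equiv (Fin d) ℝ).symm (fun k => pd d k g x)

/-- Convolution `(K ⋆ g)(x) = ∫ K(x-y) g(y) dy` of a vector-valued kernel with a scalar
function. -/
def convVec (d : ℕ) (K : Eu d → Eu d) (g : Eu d → ℝ) (x : Eu d) : Eu d :=
  ∫ y, g y • K (x - y)

/-- `(∇Φ ⋆ g)(x)`. -/
def gradPhiConv (d : ℕ) (g : Eu d → ℝ) (x : Eu d) : Eu d :=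
  convVec d (gradPhi d) g x

/-- `Dg` is the weak gradient of `g`. -/
def HasWeakGrad (d : ℕ) (g : Eu d → ℝ) (Dg : Eu d → Eu d) : Prop :=
  ∀ φ : Eu d → ℝ, ContDiff ℝ (⊤ : ℕ∞) φ → HasCompactSupport φ → ∀ k : Fin d,
    ∫ x, g x * fderiv ℝ φ x (EuclideanSpace.single k 1) = - ∫ x, (Dg x) k * φ x

/-- The class `X` of control functions, with weak gradient witness:
for a.e. `t ∈ (0,T)`, `f(t,·) ∈ W^{1,q} ∩ L^1` with
`‖f(t,·)‖_{L^1} + ‖f(t,·)‖_{L^q} + ‖∇f(t,·)‖_{L^q} ≤ l(t)`. -/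
def IsControl (d : ℕ) (T q : ℝ) (l : ℝ → ℝ) (f : ℝ → Eu d → ℝ) : Prop :=
  Measurable (Function.uncurry f) ∧
  ∃ Df : ℝ → Eu d → Eu d,
    ∀ᵐ t ∂(volume.restrict (Set.Ioo 0 T)),
      AEStronglyMeasurable (Df t) volume ∧
      HasWeakGrad d (f t) (Df t) ∧
      eLpNorm (f t) 1 volume + eLpNorm (f t) (ENNReal.ofReal q) volume +
        eLpNorm (Df t) (ENNReal.ofReal q) volume ≤ ENNReal.ofReal (l t)

/-- `l` is a nonnegative function in `L^r(0,T)`. -/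
def LrBound (T r : ℝ) (l : ℝ → ℝ) : Prop :=
  Measurable l ∧ (∀ t, 0 ≤ l t) ∧
    (∫⁻ t in Set.Ioo (0 : ℝ) T, ENNReal.ofReal (l t ^ r)) ≠ ∞

/-- `g` coincides with a Schwartz function. -/
def IsSchwartzFn {E : Type*} [NormedAddCommGroup E] [NormedSpace ℝ E] (g : E → ℝ) : Prop :=
  ∃ h : SchwartzMap E ℝ, ∀ x, h x = g x

/-- Classical solution of the controlled Keller–Segel equation
`∂_t ρ = Δρ − χ ∇·(ρ ∇Φ⋆(ρ − f))` on `[0,S]`, with the divergence expanded. -/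
def IsClassicalSol (d : ℕ) (χ S : ℝ) (f : ℝ → Eu d → ℝ) (ρ : ℝ → Eu d → ℝ) : Prop :=
  (∀ t ∈ Set.Icc (0 : ℝ) S, ∀ x, 0 ≤ ρ t x) ∧
  (∀ t ∈ Set.Icc (0 : ℝ) S, IsSchwartzFn (ρ t)) ∧
  (∀ x, ContDiffOn ℝ 1 (fun t => ρ t x) (Set.Icc 0 S)) ∧
  (∀ t ∈ Set.Ioc (0 : ℝ) S, ∀ᵐ x : Eu d,
    deriv (fun s => ρ s x) t =
      lap d (ρ t) x
      - χ * ∑ k : Fin d,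
          pd d k (ρ t) x * (gradPhiConv d (fun y => ρ t y - f t y) x) k
      + χ * ρ t x * (ρ t x - f t x))

/-- Mollifier: smooth, nonnegative, supported in the closed unit ball, unit mass. -/
def IsMollifier (d : ℕ) (jm : Eu d → ℝ) : Prop :=
  ContDiff ℝ (⊤ : ℕ∞) jm ∧ (∀ x, 0 ≤ jm x) ∧
    tsupport jm ⊆ Metric.closedBall 0 1 ∧ (∫ x, jm x) = 1

/-- Rescaled mollifier `j_ε(x) = ε^{-d} j(x/ε)`. -/
def moll (d : ℕ) (jm : Eu d → ℝ) (ε : ℝ) (x : Eu d) : ℝ :=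
  (ε ^ d)⁻¹ * jm (ε⁻¹ • x)

/-- Cutoff potential `Φ̃`: a `C¹` function equal to `Φ` for `|x| ≥ 2ε` with
`|∇Φ̃| ≤ (d-2) C_d (2ε)^{1-d}` for `|x| < 2ε`. -/
def IsCutoff (d : ℕ) (ε : ℝ) (Pt : Eu d → ℝ) : Prop :=
  ContDiff ℝ 1 Pt ∧ (∀ x : Eu d, 2 * ε ≤ ‖x‖ → Pt x = Phi d x) ∧
  (∀ x : Eu d, ‖x‖ < 2 * ε →
    ‖fderiv ℝ Pt x‖ ≤ ((d : ℝ) - 2) * Cconst d * (2 * ε) ^ (1 - (d : ℝ)))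

/-- Mollified cutoff potential `Φ̃_ε = j_ε ⋆ Φ̃`. -/
def cutMoll (d : ℕ) (jm : Eu d → ℝ) (ε : ℝ) (Pt : Eu d → ℝ) (x : Eu d) : ℝ :=
  ∫ y, moll d jm ε y * Pt (x - y)

/-! For fixed `x` the variables `Y i = h (x - X i)` are independent, lie a.s. in `[0, ‖h‖_∞]`
and have mean `c x = (h ⋆ v) x`. Expanding `(∑ i, (Y i - c x)) ^ (2m)` over index maps
`p : Fin (2m) → Fin N`, every term in which some index occurs exactly once has mean zero by
independence; in the other terms each occurring index occurs at least twice, so `p` takes at most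
`m` values and there are at most `m ^ (2m) * N ^ m` such `p`. Bounding `2m - 1` factors by `‖h‖_∞`
and the last one in `L¹` by `2 c x` gives the pointwise bound
`2 m ^ (2m) N ^ (-m) ‖h‖_∞ ^ (2m - 1) c x`, and `∫ c = ∫ h * ∫ v = 1`. -/

open ProbabilityTheory Finset

theorem card_filter_card_image_le {α β : Type*} [Fintype α] [DecidableEq α] [Nonempty α]
    [Fintype β] [DecidableEq β] (k : ℕ) :
    #{p : α → β | #(Finset.univ.image p) ≤ k} ≤ k ^ Fintype.card α * Fintype.card β ^ k := by
  calc #{p : α → β | #(Finset.univ.image p) ≤ k}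
      ≤ #(univ.image fun q : (α → Fin k) × (Fin k → β) => q.2 ∘ q.1) := by
        refine card_le_card fun p hp => ?_
        have hmem : ∀ a, p a ∈ Finset.univ.image p := fun a => mem_image_of_mem p (mem_univ a)
        obtain ⟨e⟩ : Nonempty (Finset.univ.image p ↪ Fin k) :=
          Function.Embedding.nonempty_of_card_le <| by
            simpa only [Fintype.card_coe, Fintype.card_fin] using (mem_filter.1 hp).2
        have : Nonempty (Finset.univ.image p) := ⟨⟨_, hmem (Classical.arbitrary α)⟩⟩
        refine mem_image.2 ⟨(fun a => e ⟨p a, hmem a⟩,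
          fun t => (Function.invFun e t : Finset.univ.image p)), mem_univ _, funext fun a => ?_⟩
        simp only [Function.comp_apply, Function.leftInverse_invFun e.injective _]
    _ ≤ _ := card_image_le
    _ = k ^ Fintype.card α * Fintype.card β ^ k := by simp

theorem two_mul_card_image_le_of_card_fiber_ne_one {α β : Type*} [Fintype α] [DecidableEq β]
    {p : α → β} (hp : ∀ b, #{a | p a = b} ≠ 1) :
    2 * #(Finset.univ.image p) ≤ Fintype.card α := by
  rw [← card_univ, card_eq_sum_card_image p univ, mul_comm, ← smul_eq_mul, ← sum_const]
  refine sum_le_sum fun b hb => ?_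
  obtain ⟨a, -, rfl⟩ := mem_image.1 hb
  have : 0 < #{a' | p a' = p a} := card_pos.2 ⟨a, by simp⟩
  have := hp (p a)
  omega

theorem card_filter_card_fiber_ne_one_le {β : Type*} [Fintype β] [DecidableEq β] {m : ℕ}
    (hm : m ≠ 0) :
    #{p : Fin (2 * m) → β | ∀ b, #{a | p a = b} ≠ 1} ≤ m ^ (2 * m) * Fintype.card β ^ m := by
  have : Nonempty (Fin (2 * m)) := ⟨⟨0, by omega⟩⟩
  calc _ ≤ #{p : Fin (2 * m) → β | #(Finset.univ.image p) ≤ m} := by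
        refine card_le_card (monotone_filter_right _ fun p _ hp => ?_)
        have := two_mul_card_image_le_of_card_fiber_ne_one hp
        simp only [Fintype.card_fin] at this
        omega
    _ ≤ _ := by simpa using card_filter_card_image_le (α := Fin (2 * m)) (β := β) m

theorem Fintype.prod_comp_eq_prod_pow_card_fiber {α ι M : Type*} [Fintype α] [Fintype ι]
    [DecidableEq ι] [CommMonoid M] (f : ι → M) (p : α → ι) :
    ∏ a, f (p a) = ∏ i, f i ^ #{a | p a = i} := by
  rw [← Finset.prod_fiberwise Finset.univ p]
  refine Finset.prod_congr rfl fun i _ => ?_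
  rw [Finset.prod_congr rfl fun a ha => congrArg f (Finset.mem_filter.1 ha).2, Finset.prod_const]

section Moments

variable {Ω ι α : Type*} [MeasurableSpace Ω] {P : Measure Ω} {g : ι → Ω → ℝ} {B : ℝ}
  [Fintype α]

theorem integrable_prod_comp [IsFiniteMeasure P] (hmeas : ∀ i, AEStronglyMeasurable (g i) P)
    (hbd : ∀ i, ∀ᵐ ω ∂P, |g i ω| ≤ B) (p : α → ι) :
    Integrable (fun ω => ∏ a, g (p a) ω) P := by
  refine .of_bound (Finset.aestronglyMeasurable_fun_prod _ fun a _ => hmeas (p a))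
    (B ^ Fintype.card α) ?_
  filter_upwards [ae_all_iff.2 fun a => hbd (p a)] with ω hω
  rw [Real.norm_eq_abs, abs_prod, ← card_univ, ← prod_const]
  exact prod_le_prod (fun _ _ => abs_nonneg _) fun a _ => hω a

theorem integrable_sum_pow [IsFiniteMeasure P] [Fintype ι]
    (hmeas : ∀ i, AEStronglyMeasurable (g i) P) (hbd : ∀ i, ∀ᵐ ω ∂P, |g i ω| ≤ B) (n : ℕ) :
    Integrable (fun ω => (∑ i, g i ω) ^ n) P := by
  simp_rw [Fintype.sum_pow]
  exact integrable_finsetSum _ fun p _ => integrable_prod_comp hmeas hbd p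

theorem integral_prod_comp_eq_zero [Fintype ι] [DecidableEq ι] (hind : iIndepFun g P)
    (hmeas : ∀ i, Measurable (g i)) {p : α → ι} {i₀ : ι} (hmean : ∫ ω, g i₀ ω ∂P = 0)
    (hp : #{a | p a = i₀} = 1) :
    ∫ ω, ∏ a, g (p a) ω ∂P = 0 := by
  simp_rw [fun ω => Fintype.prod_comp_eq_prod_pow_card_fiber (fun i => g i ω) p]
  rw [hind.integral_fun_prod_comp (f := fun i x => x ^ #{a | p a = i})
    (fun i => (hmeas i).aemeasurable) fun i => (measurable_id.pow_const _).aestronglyMeasurable]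
  exact prod_eq_zero (mem_univ i₀) (by simpa [hp] using hmean)

theorem abs_integral_prod_comp_le [IsFiniteMeasure P]
    (hmeas : ∀ i, AEStronglyMeasurable (g i) P) (hbd : ∀ i, ∀ᵐ ω ∂P, |g i ω| ≤ B) (p : α → ι)
    (a₀ : α) :
    |∫ ω, ∏ a, g (p a) ω ∂P| ≤ B ^ (Fintype.card α - 1) * ∫ ω, |g (p a₀) ω| ∂P := by
  classical
  have hint : Integrable (g (p a₀)) P := .of_bound (hmeas _) B (by simpa using hbd (p a₀))
  calc |∫ ω, ∏ a, g (p a) ω ∂P| ≤ ∫ ω, |∏ a, g (p a) ω| ∂P := abs_integral_le_integral_abs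
    _ ≤ ∫ ω, B ^ (Fintype.card α - 1) * |g (p a₀) ω| ∂P := by
        refine integral_mono_ae (integrable_prod_comp hmeas hbd p).abs (hint.abs.const_mul _) ?_
        filter_upwards [ae_all_iff.2 fun a => hbd (p a)] with ω hω
        rw [abs_prod, ← mul_prod_erase _ _ (mem_univ a₀), mul_comm, ← card_univ,
          ← card_erase_of_mem (mem_univ a₀), ← prod_const]
        gcongr with a
        exact hω a
    _ = _ := integral_const_mul _ _

theorem integral_sum_pow_le [IsProbabilityMeasure P] [Fintype ι] [Nonempty ι] {A : ℝ} {m : ℕ}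
    (hm : m ≠ 0) (hind : iIndepFun g P) (hmeas : ∀ i, Measurable (g i))
    (hmean : ∀ i, ∫ ω, g i ω ∂P = 0) (hbd : ∀ i, ∀ᵐ ω ∂P, |g i ω| ≤ B)
    (hA : ∀ i, ∫ ω, |g i ω| ∂P ≤ A) :
    ∫ ω, (∑ i, g i ω) ^ (2 * m) ∂P
      ≤ m ^ (2 * m) * Fintype.card ι ^ m * (B ^ (2 * m - 1) * A) := by
  classical
  obtain ⟨i₀⟩ := ‹Nonempty ι›
  have hB : 0 ≤ B := (hbd i₀).exists.elim fun ω hω => (abs_nonneg _).trans hω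
  have hA₀ : 0 ≤ A := (integral_nonneg fun ω => abs_nonneg _).trans (hA i₀)
  have hmeas' : ∀ i, AEStronglyMeasurable (g i) P := fun i => (hmeas i).aestronglyMeasurable
  set T : Finset (Fin (2 * m) → ι) := {p : Fin (2 * m) → ι | ∀ i, #{a | p a = i} ≠ 1}
  have hvanish : ∀ p ∉ T, ∫ ω, ∏ a, g (p a) ω ∂P = 0 := by
    intro p hp
    obtain ⟨i, hi⟩ : ∃ i, #{a | p a = i} = 1 := by simpa [T] using hp
    exact integral_prod_comp_eq_zero hind hmeas (hmean i) hi
  calc ∫ ω, (∑ i, g i ω) ^ (2 * m) ∂P = ∑ p ∈ T, ∫ ω, ∏ a, g (p a) ω ∂P := by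
        simp_rw [Fintype.sum_pow]
        rw [integral_finsetSum _ fun p _ => integrable_prod_comp hmeas' hbd p]
        exact (sum_subset (subset_univ T) fun p _ hp => hvanish p hp).symm
    _ ≤ ∑ p ∈ T, B ^ (2 * m - 1) * A := by
        refine sum_le_sum fun p _ => (le_abs_self _).trans ?_
        refine (abs_integral_prod_comp_le hmeas' hbd p ⟨0, by omega⟩).trans ?_
        simpa using mul_le_mul_of_nonneg_left (hA _) (pow_nonneg hB _)
    _ ≤ _ := by
        rw [sum_const, nsmul_eq_mul]
        gcongr
        exact_mod_cast card_filter_card_fiber_ne_one_le hm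

theorem lintegral_average_sub_pow_le [IsProbabilityMeasure P] [Fintype ι] {Y : ι → Ω → ℝ}
    {c : ℝ} {m : ℕ} (hm : m ≠ 0) (hind : iIndepFun Y P) (hmeas : ∀ i, Measurable (Y i))
    (hbd : ∀ i, ∀ᵐ ω ∂P, Y i ω ∈ Set.Icc 0 B) (hmean : ∀ i, ∫ ω, Y i ω ∂P = c) :
    ∫⁻ ω, ENNReal.ofReal (((Fintype.card ι : ℝ)⁻¹ * ∑ i, (Y i ω - c)) ^ (2 * m)) ∂P
      ≤ ENNReal.ofReal
          (2 * m ^ (2 * m) * (Fintype.card ι : ℝ) ^ (-(m : ℝ)) * B ^ (2 * m - 1) * c) := by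
  rcases isEmpty_or_nonempty ι with hι | hι
  · simp [hm]
  inhabit ι
  have hYint : ∀ i, Integrable (Y i) P := fun i =>
    .of_bound (hmeas i).aestronglyMeasurable B <| (hbd i).mono fun ω hω => by
      rw [Real.norm_eq_abs, abs_of_nonneg hω.1]; exact hω.2
  have hc : c ∈ Set.Icc 0 B := by
    rw [← hmean default]
    refine ⟨integral_nonneg_of_ae ((hbd default).mono fun ω hω => hω.1), ?_⟩
    simpa using integral_mono_ae (hYint default) (integrable_const B)
      ((hbd default).mono fun ω hω => hω.2)
  have hgbd : ∀ i, ∀ᵐ ω ∂P, |Y i ω - c| ≤ B := fun i =>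
    (hbd i).mono fun ω hω => abs_sub_le_iff.2 ⟨by linarith [hω.2, hc.1], by linarith [hω.1, hc.2]⟩
  have hgmean : ∀ i, ∫ ω, (Y i ω - c) ∂P = 0 := fun i => by
    rw [integral_sub (hYint i) (integrable_const c), hmean]; simp
  have hgA : ∀ i, ∫ ω, |Y i ω - c| ∂P ≤ 2 * c := fun i => by
    calc ∫ ω, |Y i ω - c| ∂P ≤ ∫ ω, (Y i ω + c) ∂P :=
          integral_mono_ae ((hYint i).sub (integrable_const c)).abs
            ((hYint i).add (integrable_const c))
            ((hbd i).mono fun ω hω => abs_sub_le_iff.2 ⟨by linarith [hc.1], by linarith [hω.1]⟩)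
      _ = 2 * c := by rw [integral_add (hYint i) (integrable_const c), hmean]; simp; ring
  have hgmeas : ∀ i, Measurable fun ω => Y i ω - c := fun i => (hmeas i).sub_const c
  have hgind : iIndepFun (fun i ω => Y i ω - c) P :=
    hind.comp (fun _ y => y - c) fun _ => measurable_id.sub_const c
  have hmoment := integral_sum_pow_le hm hgind hgmeas hgmean hgbd hgA
  set N : ℝ := (Fintype.card ι : ℝ)
  have hN : 0 < N := Nat.cast_pos.2 Fintype.card_pos
  calc ∫⁻ ω, ENNReal.ofReal ((N⁻¹ * ∑ i, (Y i ω - c)) ^ (2 * m)) ∂P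
      = ENNReal.ofReal (∫ ω, (N⁻¹ * ∑ i, (Y i ω - c)) ^ (2 * m) ∂P) := by
        refine (ofReal_integral_eq_lintegral_ofReal ?_
          (ae_of_all _ fun ω => (even_two_mul m).pow_nonneg _)).symm
        simp_rw [mul_pow]
        exact (integrable_sum_pow (fun i => (hgmeas i).aestronglyMeasurable) hgbd _).const_mul _
    _ ≤ _ := by
        simp_rw [mul_pow]
        rw [integral_const_mul]
        refine ENNReal.ofReal_le_ofReal <|
          (mul_le_mul_of_nonneg_left hmoment (pow_nonneg (inv_nonneg.2 hN.le) _)).trans_eq ?_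
        rw [Real.rpow_neg hN.le, Real.rpow_natCast, inv_pow]
        field_simp
        ring

end Moments

section Convolution

variable {G : Type*} [MeasurableSpace G] [AddCommGroup G] [MeasurableAdd₂ G] [MeasurableNeg G]
  {μ : Measure G} [μ.IsAddLeftInvariant]

theorem lintegral_ofReal_integral_sub_mul [SFinite μ] {h v : G → ℝ} (hh : Integrable h μ)
    (hv : Integrable v μ) (hh₀ : ∀ x, 0 ≤ h x) (hv₀ : ∀ x, 0 ≤ v x) :
    ∫⁻ x, ENNReal.ofReal (∫ z, h (x - z) * v z ∂μ) ∂μ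
      = ENNReal.ofReal ((∫ x, h x ∂μ) * ∫ x, v x ∂μ) := by
  have hconv : (fun x => ∫ z, h (x - z) * v z ∂μ)
      = convolution v h (ContinuousLinearMap.mul ℝ ℝ) μ := by
    ext x; simp [convolution_mul, mul_comm]
  rw [← ofReal_integral_eq_lintegral_ofReal, hconv, integral_convolution _ hv hh, mul_comm]
  · rfl
  · rw [hconv]; exact hv.integrable_convolution _ hh
  · exact ae_of_all _ fun x => integral_nonneg fun z => mul_nonneg (hh₀ _) (hv₀ _)

theorem lintegral_average_sub_convolution_pow_le [μ.IsNegInvariant] {Ω ι : Type*}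
    [MeasurableSpace Ω] {P : Measure Ω} [IsProbabilityMeasure P] [Fintype ι] {X : ι → Ω → G}
    {v h : G → ℝ} {B : ℝ} {m : ℕ} (hm : m ≠ 0) (hX : ∀ i, Measurable (X i))
    (hind : iIndepFun X P) (hv : Measurable v) (hv₀ : ∀ x, 0 ≤ v x) (hlaw : ∀ i, P.map (X i) = μ.withDensity fun x => ENNReal.ofReal (v x))
    (hh : Measurable h) (hh₀ : ∀ x, 0 ≤ h x) (hhB : ∀ᵐ x ∂μ, h x ≤ B) (x : G) :
    ∫⁻ ω, ENNReal.ofReal (((Fintype.card ι : ℝ)⁻¹ *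
        ∑ i, (h (x - X i ω) - ∫ z, h (x - z) * v z ∂μ)) ^ (2 * m)) ∂P
      ≤ ENNReal.ofReal (2 * m ^ (2 * m) * (Fintype.card ι : ℝ) ^ (-(m : ℝ)) * B ^ (2 * m - 1) *
          ∫ z, h (x - z) * v z ∂μ) := by
  have hhx : Measurable fun y => h (x - y) := hh.comp (measurable_const.sub measurable_id)
  refine lintegral_average_sub_pow_le hm (hind.comp _ fun _ => hhx) (fun i => hhx.comp (hX i))
    (fun i => ?_) (fun i => ?_)
  · have hqmp : Measure.QuasiMeasurePreserving (X i) P μ :=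
      ⟨hX i, hlaw i ▸ withDensity_absolutelyContinuous _ _⟩
    have hqmp_sub := (Measure.measurePreserving_sub_left μ x).quasiMeasurePreserving.comp hqmp
    filter_upwards [hqmp_sub.ae hhB] with ω hω using ⟨hh₀ _, hω⟩
  · rw [← integral_map (hX i).aemeasurable hhx.aestronglyMeasurable, hlaw i,
      integral_withDensity_eq_integral_toReal_smul hv.ennreal_ofReal
      (ae_of_all _ fun _ => ENNReal.ofReal_lt_top)]
    simp [hv₀, mul_comm]

end Convolution

theorem ae_norm_le_toReal_eLpNorm_top {α E : Type*} [MeasurableSpace α] [NormedAddCommGroup E]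
    {μ : Measure α} {f : α → E} (hf : eLpNorm f ⊤ μ ≠ ⊤) :
    ∀ᵐ x ∂μ, ‖f x‖ ≤ (eLpNorm f ⊤ μ).toReal := by
  rw [eLpNorm_exponent_top] at hf ⊢
  filter_upwards [ae_le_eLpNormEssSup (f := f) (μ := μ)] with x hx
  simpa using ENNReal.toReal_mono hf hx

theorem stmt16_general (d : ℕ) (m : ℕ) (hm : 1 ≤ m) :
    ∃ C : ℝ, 0 < C ∧
      ∀ (N : ℕ), 1 ≤ N →
      ∀ (Ω : Type) (mΩ : MeasurableSpace Ω) (P : Measure Ω), IsProbabilityMeasure P →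
      ∀ (X : Fin N → Ω → Eu d) (v h : Eu d → ℝ),
        (∀ i, Measurable (X i)) →
        ProbabilityTheory.iIndepFun X P →
        Measurable v → (∀ x, 0 ≤ v x) → (∫ x, v x) = 1 →
        (∀ i, P.map (X i) = volume.withDensity (fun x => ENNReal.ofReal (v x))) →
        Measurable h → (∀ x, 0 ≤ h x) → (∃ B : ℝ, ∀ x, h x ≤ B) → (∫ x, h x) = 1 →
        (∫⁻ x : Eu d, ∫⁻ ω, ENNReal.ofReal
            (((N : ℝ)⁻¹ * ∑ i : Fin N,
              (h (x - X i ω) - ∫ z, h (x - z) * v z)) ^ (2 * m)) ∂P)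
          ≤ ENNReal.ofReal (C * (N : ℝ) ^ (-(m : ℝ)) *
              (eLpNorm h ⊤ volume).toReal ^ (2 * m - 1)) := by
  refine ⟨2 * m ^ (2 * m), by positivity, ?_⟩
  intro N _ Ω _ P _ X v h hX hind hv hv₀ hv₁ hlaw hh hh₀ ⟨B, hB⟩ hh₁
  have hv_int : Integrable v := .of_integral_ne_zero (by simp [hv₁])
  have hh_int : Integrable h := .of_integral_ne_zero (by simp [hh₁])
  have hh_ess : ∀ᵐ x, h x ≤ (eLpNorm h ⊤ volume).toReal := by
    refine (ae_norm_le_toReal_eLpNorm_top (f := h) ?_).mono fun x hx =>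
      (Real.le_norm_self _).trans hx
    refine (memLp_top_of_bound hh.aestronglyMeasurable B (ae_of_all _ fun x => ?_)).eLpNorm_ne_top
    rw [Real.norm_eq_abs, abs_of_nonneg (hh₀ x)]
    exact hB x
  set K : ℝ :=
    2 * m ^ (2 * m) * (N : ℝ) ^ (-(m : ℝ)) * (eLpNorm h ⊤ volume).toReal ^ (2 * m - 1)
  calc _ ≤ ∫⁻ x, ENNReal.ofReal K * ENNReal.ofReal (∫ z, h (x - z) * v z) := by
        refine lintegral_mono fun x => ?_
        rw [← ENNReal.ofReal_mul (by positivity)]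
        simpa only [Fintype.card_fin] using
          lintegral_average_sub_convolution_pow_le (by omega) hX hind hv hv₀ hlaw hh hh₀ hh_ess x
    _ = ENNReal.ofReal K := by
        rw [lintegral_const_mul' _ _ ENNReal.ofReal_ne_top,
          lintegral_ofReal_integral_sub_mul hh_int hv_int hh₀ hv₀, hh₁, hv₁]
        simp

/-- moment estimate of order `N^{-m}` for empirical fluctuations of
i.i.d. random variables with density `v` against a bounded probability kernel `h`. -/
theorem stmt16 (d : ℕ) (hd : 1 ≤ d) (m : ℕ) (hm : 1 ≤ m) :
    ∃ C : ℝ, 0 < C ∧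
      ∀ (N : ℕ), 1 ≤ N →
      ∀ (Ω : Type) (mΩ : MeasurableSpace Ω) (P : Measure Ω), IsProbabilityMeasure P →
      ∀ (X : Fin N → Ω → Eu d) (v h : Eu d → ℝ),
        (∀ i, Measurable (X i)) →
        ProbabilityTheory.iIndepFun X P →
        Measurable v → (∀ x, 0 ≤ v x) → (∫ x, v x) = 1 →
        (∀ i, P.map (X i) = volume.withDensity (fun x => ENNReal.ofReal (v x))) →
        Measurable h → (∀ x, 0 ≤ h x) → (∃ B : ℝ, ∀ x, h x ≤ B) → (∫ x, h x) = 1 →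
        (∫⁻ x : Eu d, ∫⁻ ω, ENNReal.ofReal
            (((N : ℝ)⁻¹ * ∑ i : Fin N,
              (h (x - X i ω) - ∫ z, h (x - z) * v z)) ^ (2 * m)) ∂P)
          ≤ ENNReal.ofReal (C * (N : ℝ) ^ (-(m : ℝ)) *
              (eLpNorm h ⊤ volume).toReal ^ (2 * m - 1)) :=
  stmt16_general d m hm

end
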